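/- arXiv:2604.15672 — 2 statements merged into one kernel-verified Lean document; each statement's English description precedes it below -/
import Mathlib

section
/- Assume E_q[W⁴] < ∞. There is a constant C depending only on E_q[W⁴] and χ²(p‖q) (not on A or N) such that for every subset A of Σ* and every N ≥ 1, the self-normalized importance sampling estimator satisfies E[(p̂_N(A) − p(A))²] ≤ (1 + χ²(p‖q))/N + C·N^{−3/2}. -/
/-!
Statement 1: Assume `E_q[W⁴] < ∞`. There is a constant `C` depending only on
`E_q[W⁴]` and `χ²(p‖q)` (in particular not on `A` or `N`) such that for every
`A ⊆ Σ*` and every `N ≥ 1`, the self-normalized importance sampling estimator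
satisfies `E[(p̂_N(A) − p(A))²] ≤ (1 + χ²(p‖q))/N + C·N^{−3/2}`.
-/

noncomputable section

open scoped BigOperators

variable {σ : Type*}

/-- Expectation of `f` under `N` i.i.d. samples drawn from the pmf `q`. -/
def expN (q : σ → ℝ) (N : ℕ) (f : (Fin N → σ) → ℝ) : ℝ :=
  ∑' ω : Fin N → σ, (∏ n, q (ω n)) * f ω

/-- The unnormalized importance sampling estimator
`p̃_N(A)(ω) = (1/N) ∑ₙ (p(ωₙ)/q(ωₙ)) · 1[ωₙ ∈ A]`. -/
def ptildeN (p q : σ → ℝ) (N : ℕ) (A : Set σ) (ω : Fin N → σ) : ℝ :=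
  (N : ℝ)⁻¹ * ∑ n, (p (ω n) / q (ω n)) * A.indicator 1 (ω n)

/-- The self-normalized importance sampling estimator
`p̂_N(A) = p̃_N(A) / p̃_N(Σ*)`. -/
def phatN (p q : σ → ℝ) (N : ℕ) (A : Set σ) (ω : Fin N → σ) : ℝ :=
  ptildeN p q N A ω / ptildeN p q N Set.univ ω

/-!
Write `Y = p̃_N(A)`, `Z = p̃_N(Σ*)`, `μ = p(A)`, `D = Y - μ Z` and `E = Z - 1`. Both `D` and `E`
are sample means of i.i.d. centered variables, `U = W (1_A - μ)` and `V = W - 1`. Where `Z ≥ 1/2`,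
`(Y / Z - μ)² = D² / Z² ≤ D² (1 + 6 |E|)`, and AM-GM with weight `s = √N` splits `6 D² |E|` into
`3 s D⁴ + 3 E² / s`; where `Z < 1/2`, the error is at most `1 ≤ 32 E⁴`. In expectation
`E[D²] = E_q[U²] / N ≤ E_q[W²] / N = (1 + χ²) / N` is the leading term, and the fourth-moment
identity `E[(X₁ + ⋯ + X_N)⁴] = N m₄ + 3 N (N - 1) m₂²` for centered i.i.d. summands makes every
other term `O(N^{-3/2})`.
-/

open Finset

lemma summable_of_tsum_ne_zero {ι : Type*} {f : ι → ℝ} (h : ∑' x, f x ≠ 0) : Summable f := by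
  by_contra hf
  exact h (tsum_eq_zero_of_not_summable hf)

section Expectation

variable {q : σ → ℝ} {n N : ℕ}

def IntegrableN (q : σ → ℝ) (N : ℕ) (f : (Fin N → σ) → ℝ) : Prop :=
  Summable fun ω : Fin N → σ => (∏ i, q (ω i)) * f ω

lemma IntegrableN.add {f g : (Fin N → σ) → ℝ} (hf : IntegrableN q N f)
    (hg : IntegrableN q N g) : IntegrableN q N (fun ω => f ω + g ω) := by
  simpa only [IntegrableN, mul_add] using Summable.add hf hg

lemma IntegrableN.const_mul {f : (Fin N → σ) → ℝ} (hf : IntegrableN q N f) (c : ℝ) :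
    IntegrableN q N (fun ω => c * f ω) := by
  simpa only [IntegrableN, mul_left_comm c] using hf.mul_left c

lemma IntegrableN.finset_sum {ι : Type*} (s : Finset ι) {f : ι → (Fin N → σ) → ℝ}
    (hf : ∀ j ∈ s, IntegrableN q N (f j)) : IntegrableN q N (fun ω => ∑ j ∈ s, f j ω) := by
  simpa only [IntegrableN, mul_sum] using summable_sum hf

lemma expN_add {f g : (Fin N → σ) → ℝ} (hf : IntegrableN q N f) (hg : IntegrableN q N g) :
    expN q N (fun ω => f ω + g ω) = expN q N f + expN q N g := by
  simp only [expN, mul_add]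
  exact hf.tsum_add hg

lemma expN_const_mul (c : ℝ) (f : (Fin N → σ) → ℝ) :
    expN q N (fun ω => c * f ω) = c * expN q N f := by
  simp only [expN, mul_left_comm _ c, tsum_mul_left]

lemma expN_finset_sum {ι : Type*} (s : Finset ι) {f : ι → (Fin N → σ) → ℝ}
    (hf : ∀ j ∈ s, IntegrableN q N (f j)) :
    expN q N (fun ω => ∑ j ∈ s, f j ω) = ∑ j ∈ s, expN q N (f j) := by
  simp only [expN, mul_sum]
  exact Summable.tsum_finsetSum hf

lemma expN_mono (hq0 : ∀ x, 0 ≤ q x) {f g : (Fin N → σ) → ℝ} (hf0 : ∀ ω, 0 ≤ f ω)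
    (hfg : ∀ ω, f ω ≤ g ω) (hg : IntegrableN q N g) : expN q N f ≤ expN q N g := by
  have hw (ω : Fin N → σ) : 0 ≤ ∏ i, q (ω i) := prod_nonneg fun i _ => hq0 _
  have hle (ω : Fin N → σ) := mul_le_mul_of_nonneg_left (hfg ω) (hw ω)
  exact Summable.tsum_le_tsum hle
    (hg.of_nonneg_of_le (fun ω => mul_nonneg (hw ω) (hf0 ω)) hle) hg

lemma expN_zero (f : (Fin 0 → σ) → ℝ) : expN q 0 f = f Fin.elim0 := by
  rw [expN, tsum_eq_single Fin.elim0 fun ω hω => (hω (Subsingleton.elim _ _)).elim]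
  simp

lemma prod_mul_head_mul_tail_consEquiv (g : σ → ℝ) (f : (Fin n → σ) → ℝ)
    (z : σ × (Fin n → σ)) :
    (fun ω : Fin (n + 1) → σ => (∏ i, q (ω i)) * (g (ω 0) * f (Fin.tail ω)))
        (Fin.consEquiv (fun _ => σ) z) = (q z.1 * g z.1) * ((∏ i, q (z.2 i)) * f z.2) := by
  obtain ⟨x, ρ⟩ := z
  simp only [Fin.consEquiv, Equiv.coe_fn_mk, Fin.prod_univ_succ, Fin.cons_zero, Fin.cons_succ,
    Fin.tail_cons]
  ring

lemma IntegrableN.head_mul_tail {g : σ → ℝ} {f : (Fin n → σ) → ℝ}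
    (hg : Summable fun x => q x * g x) (hf : IntegrableN q n f) :
    IntegrableN q (n + 1) (fun ω => g (ω 0) * f (Fin.tail ω)) := by
  rw [IntegrableN, ← (Fin.consEquiv fun _ => σ).summable_iff]
  exact (summable_mul_of_summable_norm hg.norm hf.norm).congr fun z =>
    (prod_mul_head_mul_tail_consEquiv g f z).symm

lemma expN_head_mul_tail {g : σ → ℝ} {f : (Fin n → σ) → ℝ}
    (hg : Summable fun x => q x * g x) (hf : IntegrableN q n f) :
    expN q (n + 1) (fun ω => g (ω 0) * f (Fin.tail ω)) = (∑' x, q x * g x) * expN q n f := by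
  rw [expN, ← (Fin.consEquiv fun _ => σ).tsum_eq, expN,
    tsum_mul_tsum_of_summable_norm hg.norm hf.norm]
  exact tsum_congr (prod_mul_head_mul_tail_consEquiv g f)

end Expectation

section SampleSum

variable {q h : σ → ℝ} {n : ℕ}

lemma sum_fin_succ_pow (ω : Fin (n + 1) → σ) (k : ℕ) :
    (∑ i, h (ω i)) ^ k = ∑ j ∈ range (k + 1),
      (k.choose j : ℝ) * (h (ω 0) ^ j * (∑ i, h (Fin.tail ω i)) ^ (k - j)) := by
  rw [Fin.sum_univ_succ, add_pow]
  refine sum_congr rfl fun j _ => ?_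
  rw [mul_comm]
  rfl

lemma integrableN_sum_pow (k : ℕ) (hsum : ∀ j ≤ k, Summable fun x => q x * h x ^ j) :
    IntegrableN q n (fun ω => (∑ i, h (ω i)) ^ k) := by
  induction n generalizing k with
  | zero => exact (hasSum_fintype _).summable
  | succ n ih =>
    simp only [sum_fin_succ_pow]
    refine IntegrableN.finset_sum _ fun j hj => IntegrableN.const_mul ?_ _
    have hjk : j ≤ k := Nat.lt_succ_iff.mp (mem_range.mp hj)
    exact IntegrableN.head_mul_tail (g := fun x => h x ^ j)
      (f := fun ρ => (∑ i, h (ρ i)) ^ (k - j)) (hsum j hjk)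
      (ih (k - j) fun i hi => hsum i (hi.trans (Nat.sub_le k j)))

lemma expN_sum_pow_succ (k : ℕ) (hsum : ∀ j ≤ k, Summable fun x => q x * h x ^ j) :
    expN q (n + 1) (fun ω => (∑ i, h (ω i)) ^ k) = ∑ j ∈ range (k + 1),
      (k.choose j : ℝ) *
        ((∑' x, q x * h x ^ j) * expN q n (fun ω => (∑ i, h (ω i)) ^ (k - j))) := by
  have hint (j : ℕ) (hj : j ∈ range (k + 1)) :
      IntegrableN q n (fun ω => (∑ i, h (ω i)) ^ (k - j)) :=
    integrableN_sum_pow (k - j) fun i hi => hsum i (hi.trans (Nat.sub_le k j))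
  have hjk {j : ℕ} (hj : j ∈ range (k + 1)) : j ≤ k := Nat.lt_succ_iff.mp (mem_range.mp hj)
  simp only [sum_fin_succ_pow]
  rw [expN_finset_sum _ fun j hj => (IntegrableN.head_mul_tail (g := fun x => h x ^ j)
    (hsum j (hjk hj)) (hint j hj)).const_mul _]
  refine sum_congr rfl fun j hj => ?_
  rw [expN_const_mul, expN_head_mul_tail (g := fun x => h x ^ j) (hsum j (hjk hj)) (hint j hj)]

variable (hq1 : ∑' x, q x = 1) (hmean : ∑' x, q x * h x = 0)
include hq1

lemma expN_one (hq : Summable q) : expN q n (fun _ => 1) = 1 := by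
  induction n with
  | zero => simp [expN_zero]
  | succ n ih =>
    -- the case `k = 0` of `expN_sum_pow_succ`, for an arbitrary `h`
    have h0 := expN_sum_pow_succ (n := n) (h := q) 0 fun j hj => by
      simpa [Nat.le_zero.mp hj] using hq
    simpa [hq1, ih] using h0

include hmean

lemma expN_sum_eq_zero (hsum : ∀ j ≤ 1, Summable fun x => q x * h x ^ j) :
    expN q n (fun ω => ∑ i, h (ω i)) = 0 := by
  induction n with
  | zero => simp [expN_zero]
  | succ n ih =>
    simpa [sum_range_succ, hq1, hmean, ih] using expN_sum_pow_succ (n := n) 1 hsum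

lemma expN_sum_sq (hsum : ∀ j ≤ 2, Summable fun x => q x * h x ^ j) :
    expN q n (fun ω => (∑ i, h (ω i)) ^ 2) = n * ∑' x, q x * h x ^ 2 := by
  induction n with
  | zero => simp [expN_zero]
  | succ n ih =>
    have hq : Summable q := by simpa using hsum 0 (Nat.zero_le _)
    rw [expN_sum_pow_succ 2 hsum]
    simp [sum_range_succ, hq1, hmean, ih, expN_one hq1 hq]
    ring

lemma expN_sum_pow_four (hsum : ∀ j ≤ 4, Summable fun x => q x * h x ^ j) :
    expN q n (fun ω => (∑ i, h (ω i)) ^ 4)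
      = n * ∑' x, q x * h x ^ 4 + 3 * n * (n - 1) * (∑' x, q x * h x ^ 2) ^ 2 := by
  induction n with
  | zero => simp [expN_zero]
  | succ n ih =>
    have hq : Summable q := by simpa using hsum 0 (Nat.zero_le _)
    have hsum_le (m : ℕ) (hm : m ≤ 4) (j : ℕ) (hj : j ≤ m) := hsum j (hj.trans hm)
    rw [expN_sum_pow_succ 4 hsum]
    simp [sum_range_succ, Nat.choose, hq1, hmean, ih, expN_one hq1 hq,
      expN_sum_eq_zero hq1 hmean (hsum_le 1 (by norm_num)),
      expN_sum_sq hq1 hmean (hsum_le 2 (by norm_num))]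
    ring

end SampleSum

section SampleMean

variable {q h : σ → ℝ} {N : ℕ}

def sampleMean (h : σ → ℝ) (N : ℕ) (ω : Fin N → σ) : ℝ :=
  (N : ℝ)⁻¹ * ∑ i, h (ω i)

lemma integrableN_sampleMean_pow (k : ℕ) (hsum : ∀ j ≤ k, Summable fun x => q x * h x ^ j) :
    IntegrableN q N (fun ω => sampleMean h N ω ^ k) := by
  simpa only [sampleMean, mul_pow] using (integrableN_sum_pow k hsum).const_mul ((N : ℝ)⁻¹ ^ k)

variable (hq1 : ∑' x, q x = 1) (hmean : ∑' x, q x * h x = 0)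
include hq1 hmean

lemma expN_sampleMean_sq (hsum : ∀ j ≤ 2, Summable fun x => q x * h x ^ j) :
    expN q N (fun ω => sampleMean h N ω ^ 2) = (∑' x, q x * h x ^ 2) / N := by
  simp only [sampleMean, mul_pow, expN_const_mul, expN_sum_sq hq1 hmean hsum]
  rcases N.eq_zero_or_pos with rfl | hN
  · simp
  · field_simp

lemma expN_sampleMean_pow_four_le (hq0 : ∀ x, 0 ≤ q x)
    (hsum : ∀ j ≤ 4, Summable fun x => q x * h x ^ j) (hN : 1 ≤ N) :
    expN q N (fun ω => sampleMean h N ω ^ 4)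
      ≤ (3 * (∑' x, q x * h x ^ 2) ^ 2 + ∑' x, q x * h x ^ 4) / N ^ 2 := by
  simp only [sampleMean, mul_pow, expN_const_mul, expN_sum_pow_four hq1 hmean hsum]
  have hN1 : (1 : ℝ) ≤ N := by exact_mod_cast hN
  have hm4 : 0 ≤ ∑' x, q x * h x ^ 4 := tsum_nonneg fun x => mul_nonneg (hq0 x) (by positivity)
  rw [inv_pow, inv_mul_le_iff₀ (by positivity), ← mul_div_assoc, le_div_iff₀ (by positivity)]
  have hN3 : (0 : ℝ) ≤ N ^ 3 := by positivity
  nlinarith [mul_nonneg hN3 (mul_nonneg (sub_nonneg.2 hN1) hm4),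
    mul_nonneg hN3 (sq_nonneg (∑' x, q x * h x ^ 2))]

end SampleMean

lemma one_le_sq_mul_one_add_abs_sub_one {Z : ℝ} (hZ : 1 / 2 ≤ Z) :
    1 ≤ Z ^ 2 * (1 + 6 * |Z - 1|) := by
  rcases le_total 1 Z with h1 | h1
  · rw [abs_of_nonneg (by linarith)]
    nlinarith
  · rw [abs_of_nonpos (by linarith)]
    -- `Z² (7 - 6Z) - 1 = (1 - Z)(3Z + 1)(2Z - 1)`
    nlinarith [mul_nonneg (mul_nonneg (sub_nonneg.2 h1) (by linarith : (0 : ℝ) ≤ 3 * Z + 1))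
      (by linarith : (0 : ℝ) ≤ 2 * Z - 1)]

lemma sq_div_sub_le {Y Z μ s : ℝ} (hY0 : 0 ≤ Y) (hYZ : Y ≤ Z) (hμ0 : 0 ≤ μ) (hμ1 : μ ≤ 1)
    (hs : 0 < s) :
    (Y / Z - μ) ^ 2
      ≤ (Y - μ * Z) ^ 2 + 3 * s * (Y - μ * Z) ^ 4 + 3 / s * (Z - 1) ^ 2 + 32 * (Z - 1) ^ 4 := by
  set D := Y - μ * Z
  set E := Z - 1
  rcases le_or_gt (1 / 2) Z with hZ | hZ
  · have hZ0 : 0 < Z := by linarith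
    have hdiv : Y / Z - μ = D / Z := by field_simp; ring
    have hinv : (D / Z) ^ 2 ≤ D ^ 2 + 6 * D ^ 2 * |E| := by
      rw [div_pow, div_le_iff₀ (by positivity)]
      nlinarith [one_le_sq_mul_one_add_abs_sub_one hZ, sq_nonneg D]
    have amgm : 6 * D ^ 2 * |E| ≤ 3 * s * D ^ 4 + 3 / s * E ^ 2 := by
      have h := div_nonneg (mul_nonneg (by norm_num : (0 : ℝ) ≤ 3) (sq_nonneg (s * D ^ 2 - |E|)))
        hs.le
      have expand : 3 * (s * D ^ 2 - |E|) ^ 2 / s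
          = 3 * s * D ^ 4 + 3 / s * E ^ 2 - 6 * D ^ 2 * |E| := by
        field_simp
        linear_combination 3 * sq_abs E
      linarith
    rw [hdiv]
    nlinarith [pow_nonneg (sq_nonneg E) 2]
  · have hr0 : 0 ≤ Y / Z := div_nonneg hY0 (hY0.trans hYZ)
    have hr1 : Y / Z ≤ 1 := div_le_one_of_le₀ hYZ (hY0.trans hYZ)
    have hE : 1 / 4 ≤ E ^ 2 := by nlinarith
    nlinarith [pow_nonneg (sq_nonneg D) 2, div_nonneg (by norm_num : (0 : ℝ) ≤ 3) hs.le,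
      sq_nonneg E, mul_nonneg (div_nonneg (by norm_num : (0 : ℝ) ≤ 3) hs.le) (sq_nonneg E)]

lemma expN_sq_div_sub_le {q : σ → ℝ} {N : ℕ} (hq0 : ∀ x, 0 ≤ q x)
    {Y Z D E : (Fin N → σ) → ℝ} {μ s : ℝ} (hY0 : ∀ ω, 0 ≤ Y ω) (hYZ : ∀ ω, Y ω ≤ Z ω)
    (hμ0 : 0 ≤ μ) (hμ1 : μ ≤ 1) (hs : 0 < s)
    (hD : ∀ ω, Y ω - μ * Z ω = D ω) (hE : ∀ ω, Z ω - 1 = E ω)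
    (hD2 : IntegrableN q N fun ω => D ω ^ 2) (hD4 : IntegrableN q N fun ω => D ω ^ 4)
    (hE2 : IntegrableN q N fun ω => E ω ^ 2) (hE4 : IntegrableN q N fun ω => E ω ^ 4) :
    expN q N (fun ω => (Y ω / Z ω - μ) ^ 2)
      ≤ expN q N (fun ω => D ω ^ 2) + 3 * s * expN q N (fun ω => D ω ^ 4)
        + 3 / s * expN q N (fun ω => E ω ^ 2) + 32 * expN q N (fun ω => E ω ^ 4) := by
  have hint := ((hD2.add (hD4.const_mul (3 * s))).add (hE2.const_mul (3 / s))).add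
    (hE4.const_mul 32)
  refine (expN_mono hq0 (fun ω => sq_nonneg _) (fun ω => ?_) hint).trans_eq ?_
  · rw [← hD, ← hE]
    exact sq_div_sub_le (hY0 ω) (hYZ ω) hμ0 hμ1 hs
  · rw [expN_add ((hD2.add (hD4.const_mul _)).add (hE2.const_mul _)) (hE4.const_mul _),
      expN_add (hD2.add (hD4.const_mul _)) (hE2.const_mul _), expN_add hD2 (hD4.const_mul _),
      expN_const_mul, expN_const_mul, expN_const_mul]

section WeightedMoments

variable {q f g : σ → ℝ}

lemma summable_mul_of_abs_le (hq0 : ∀ x, 0 ≤ q x) (hg : Summable fun x => q x * g x)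
    (hfg : ∀ x, |f x| ≤ g x) : Summable fun x => q x * f x :=
  hg.of_norm_bounded fun x => by
    rw [Real.norm_eq_abs, abs_mul, abs_of_nonneg (hq0 x)]
    exact mul_le_mul_of_nonneg_left (hfg x) (hq0 x)

lemma summable_mul_pow_of_abs_le {m : ℕ} (hq0 : ∀ x, 0 ≤ q x) (hm : Even m)
    (hg : Summable fun x => q x * g x ^ m) (hfg : ∀ x, |f x| ≤ |g x|) :
    Summable fun x => q x * f x ^ m :=
  summable_mul_of_abs_le hq0 hg fun x => by
    rw [abs_pow, ← hm.pow_abs (g x)]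
    exact pow_le_pow_left₀ (abs_nonneg _) (hfg x) m

lemma summable_mul_pow_of_le {j m : ℕ} (hq0 : ∀ x, 0 ≤ q x) (hq : Summable q) (hm : Even m)
    (hf : Summable fun x => q x * f x ^ m) (hj : j ≤ m) : Summable fun x => q x * f x ^ j := by
  refine summable_mul_of_abs_le (g := fun x => 1 + f x ^ m) hq0
    ((hq.add hf).congr fun x => by ring) fun x => ?_
  rw [abs_pow, ← hm.pow_abs (f x)]
  rcases le_total |f x| 1 with h | h
  · linarith [pow_le_one₀ (n := j) (abs_nonneg _) h, pow_nonneg (abs_nonneg (f x)) m]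
  · linarith [pow_le_pow_right₀ h hj]

lemma tsum_mul_pow_le_of_abs_le {m : ℕ} (hq0 : ∀ x, 0 ≤ q x) (hm : Even m)
    (hf : Summable fun x => q x * f x ^ m) (hg : Summable fun x => q x * g x ^ m)
    (hfg : ∀ x, |f x| ≤ |g x|) : ∑' x, q x * f x ^ m ≤ ∑' x, q x * g x ^ m := by
  refine Summable.tsum_le_tsum (fun x => mul_le_mul_of_nonneg_left ?_ (hq0 x)) hf hg
  rw [← hm.pow_abs (f x), ← hm.pow_abs (g x)]
  exact pow_le_pow_left₀ (abs_nonneg _) (hfg x) m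

end WeightedMoments

lemma sub_one_pow_four_le (a : ℝ) : (a - 1) ^ 4 ≤ 8 + 8 * a ^ 4 := by
  nlinarith [sq_nonneg (a + 1), sq_nonneg (a ^ 2 - 1), sq_nonneg ((a - 1) ^ 2 - 2 * (a ^ 2 + 1))]

lemma abs_mul_le_abs_of_abs_le_one {a c : ℝ} (hc : |c| ≤ 1) : |a * c| ≤ |a| := by
  rw [abs_mul]
  exact mul_le_of_le_one_right (abs_nonneg _) hc

section ImportanceWeight

variable {p q : σ → ℝ} (hq0 : ∀ x, 0 ≤ q x) (hq : Summable q)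
  (hW4 : Summable fun x => q x * (p x / q x) ^ 4)
  (hac : ∀ x, q x = 0 → p x = 0) (hp : Summable p) (hp1 : ∑' x, p x = 1) (hq1 : ∑' x, q x = 1)

include hq0 hq hW4

lemma summable_mul_weight_pow : ∀ j ≤ 4, Summable fun x => q x * (p x / q x) ^ j :=
  fun _ hj => summable_mul_pow_of_le hq0 hq (by decide) hW4 hj

lemma summable_mul_weight_sub_one_pow : ∀ j ≤ 4, Summable fun x => q x * (p x / q x - 1) ^ j := by
  refine fun _ hj => summable_mul_pow_of_le hq0 hq (by decide) ?_ hj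
  refine summable_mul_of_abs_le (g := fun x => 8 + 8 * (p x / q x) ^ 4) hq0
    (((hq.add hW4).mul_left 8).congr fun x => by ring) fun x => ?_
  rw [abs_of_nonneg (by positivity)]
  exact sub_one_pow_four_le _

lemma summable_mul_weight_mul_pow {c : σ → ℝ} (hc : ∀ x, |c x| ≤ 1) :
    ∀ j ≤ 4, Summable fun x => q x * (p x / q x * c x) ^ j :=
  fun _ hj => summable_mul_pow_of_le hq0 hq (by decide)
    (summable_mul_pow_of_abs_le hq0 (by decide) hW4 fun _ => abs_mul_le_abs_of_abs_le_one (hc _)) hj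

include hq1 in
lemma tsum_mul_weight_sub_one_pow_four_le :
    ∑' x, q x * (p x / q x - 1) ^ 4 ≤ 8 + 8 * ∑' x, q x * (p x / q x) ^ 4 :=
  calc ∑' x, q x * (p x / q x - 1) ^ 4 ≤ ∑' x, (8 * q x + 8 * (q x * (p x / q x) ^ 4)) :=
        Summable.tsum_le_tsum (fun x => by
          nlinarith [mul_le_mul_of_nonneg_left (sub_one_pow_four_le (p x / q x)) (hq0 x)])
          (summable_mul_weight_sub_one_pow hq0 hq hW4 4 le_rfl)
          ((hq.mul_left 8).add (hW4.mul_left 8))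
    _ = 8 + 8 * ∑' x, q x * (p x / q x) ^ 4 := by
      rw [(hq.mul_left 8).tsum_add (hW4.mul_left 8), tsum_mul_left, tsum_mul_left, hq1, mul_one]

include hac hp hp1 hq1 in
lemma tsum_mul_weight_mul_sq_le {c : σ → ℝ} (hc : ∀ x, |c x| ≤ 1) :
    ∑' x, q x * (p x / q x * c x) ^ 2 ≤ 1 + ∑' x, q x * (p x / q x - 1) ^ 2 := by
  have hW2 : ∑' x, q x * (p x / q x) ^ 2 = 1 + ∑' x, q x * (p x / q x - 1) ^ 2 := by
    have h (x : σ) : q x * (p x / q x) ^ 2 = 2 * p x - q x + q x * (p x / q x - 1) ^ 2 := by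
      linear_combination 2 * mul_div_cancel_of_imp' (hac x)
    rw [tsum_congr h, ((hp.mul_left 2).sub hq).tsum_add
      (summable_mul_weight_sub_one_pow hq0 hq hW4 2 (by norm_num)),
      (hp.mul_left 2).tsum_sub hq, tsum_mul_left, hp1, hq1]
    ring
  exact hW2 ▸ tsum_mul_pow_le_of_abs_le hq0 even_two
    (summable_mul_weight_mul_pow hq0 hq hW4 hc 2 (by norm_num))
    (summable_mul_weight_pow hq0 hq hW4 2 (by norm_num))
    fun _ => abs_mul_le_abs_of_abs_le_one (hc _)

lemma tsum_mul_weight_mul_pow_four_le {c : σ → ℝ} (hc : ∀ x, |c x| ≤ 1) :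
    ∑' x, q x * (p x / q x * c x) ^ 4 ≤ ∑' x, q x * (p x / q x) ^ 4 :=
  tsum_mul_pow_le_of_abs_le hq0 (by decide) (summable_mul_weight_mul_pow hq0 hq hW4 hc 4 le_rfl)
    hW4 fun _ => abs_mul_le_abs_of_abs_le_one (hc _)

end ImportanceWeight

section Centering

variable {p q : σ → ℝ} (hac : ∀ x, q x = 0 → p x = 0) (hp : Summable p) (hp1 : ∑' x, p x = 1)
include hac hp hp1

lemma tsum_mul_weight_mul_indicator_sub (A : Set σ) :
    ∑' x, q x * (p x / q x * (A.indicator 1 x - ∑' y, A.indicator p y)) = 0 := by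
  set μ := ∑' y, A.indicator p y
  have h (x : σ) : q x * (p x / q x * (A.indicator 1 x - μ)) = A.indicator p x - μ * p x := by
    rw [← mul_assoc, mul_div_cancel_of_imp' (hac x)]
    by_cases hx : x ∈ A <;> simp [hx] <;> ring
  rw [tsum_congr h, (hp.indicator A).tsum_sub (hp.mul_left μ), tsum_mul_left, hp1, mul_one,
    sub_self]

lemma tsum_mul_weight_sub_one (hq : Summable q) (hq1 : ∑' x, q x = 1) :
    ∑' x, q x * (p x / q x - 1) = 0 := by
  have h (x : σ) : q x * (p x / q x - 1) = p x - q x := by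
    rw [mul_sub, mul_div_cancel_of_imp' (hac x), mul_one]
  rw [tsum_congr h, hp.tsum_sub hq, hp1, hq1, sub_self]

end Centering

lemma tsum_indicator_mem_Icc {p : σ → ℝ} (hp0 : ∀ x, 0 ≤ p x) (hp : Summable p)
    (hp1 : ∑' x, p x = 1) (A : Set σ) : ∑' x, A.indicator p x ∈ Set.Icc 0 1 :=
  ⟨tsum_nonneg (Set.indicator_nonneg fun x _ => hp0 x),
    hp1 ▸ Summable.tsum_le_tsum (Set.indicator_le_self' fun x _ => hp0 x) (hp.indicator A) hp⟩

lemma abs_indicator_one_sub_le_one (A : Set σ) (x : σ) {μ : ℝ} (hμ0 : 0 ≤ μ) (hμ1 : μ ≤ 1) :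
    |A.indicator (1 : σ → ℝ) x - μ| ≤ 1 := by
  by_cases hx : x ∈ A <;> simp [hx, abs_le] <;> constructor <;> linarith

section Estimators

variable {p q : σ → ℝ} {N : ℕ} (A : Set σ) (ω : Fin N → σ)

lemma ptildeN_sub_mul_ptildeN_univ (μ : ℝ) :
    ptildeN p q N A ω - μ * ptildeN p q N Set.univ ω
      = sampleMean (fun x => p x / q x * (A.indicator 1 x - μ)) N ω := by
  simp only [ptildeN, sampleMean, mul_sub, sum_sub_distrib, mul_sum, Set.indicator_univ,
    Pi.one_apply]
  ring_nf

lemma ptildeN_univ_sub_one (hN : N ≠ 0) :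
    ptildeN p q N Set.univ ω - 1 = sampleMean (fun x => p x / q x - 1) N ω := by
  simp [ptildeN, sampleMean, mul_sub, sum_sub_distrib, hN]

variable (hW0 : ∀ x, 0 ≤ p x / q x)
include hW0

lemma ptildeN_nonneg : 0 ≤ ptildeN p q N A ω :=
  mul_nonneg (by positivity) (sum_nonneg fun i _ =>
    mul_nonneg (hW0 _) (Set.indicator_nonneg (fun _ _ => zero_le_one) _))

lemma ptildeN_le_ptildeN_univ : ptildeN p q N A ω ≤ ptildeN p q N Set.univ ω := by
  refine mul_le_mul_of_nonneg_left (sum_le_sum fun i _ => ?_) (by positivity)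
  refine mul_le_mul_of_nonneg_left ?_ (hW0 _)
  by_cases hx : ω i ∈ A <;> simp [hx]

end Estimators

lemma add_le_of_moment_bounds {N s a b c d M B χ V : ℝ} (hs : 1 ≤ s) (hN : s ^ 2 = N)
    (ha : a ≤ M / N) (hb : b ≤ B / N ^ 2) (hc : c = χ / N) (hd : d ≤ V / N ^ 2) (hV : 0 ≤ V) :
    a + 3 * s * b + 3 / s * c + 32 * d ≤ M / N + (3 * B + 3 * χ + 32 * V) / (N * s) := by
  subst hN hc
  have hs0 : 0 < s := by linarith
  have hb' : 3 * s * b ≤ 3 * B / (s ^ 2 * s) := by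
    calc 3 * s * b ≤ 3 * s * (B / (s ^ 2) ^ 2) := by gcongr
      _ = 3 * B / (s ^ 2 * s) := by field_simp
  have hd' : 32 * d ≤ 32 * V / (s ^ 2 * s) := by
    rw [mul_div_assoc]
    exact mul_le_mul_of_nonneg_left
      (hd.trans (div_le_div_of_nonneg_left hV (by positivity) (by nlinarith))) (by norm_num)
  have hc' : 3 / s * (χ / s ^ 2) = 3 * χ / (s ^ 2 * s) := by field_simp
  rw [add_div, add_div, hc']
  linarith

/-- The constant `C` of the theorem, in terms of `χ = χ²(p‖q)` and `M₄ = E_q[W⁴]`. -/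
def snisConst (χ M₄ : ℝ) : ℝ :=
  3 * (3 * (1 + χ) ^ 2 + M₄) + 3 * χ + 32 * (3 * χ ^ 2 + (8 + 8 * M₄))

lemma snis_mse_le {p q : σ → ℝ}
    (hp0 : ∀ x, 0 ≤ p x) (hp : Summable p) (hp1 : ∑' x, p x = 1)
    (hq0 : ∀ x, 0 ≤ q x) (hq : Summable q) (hq1 : ∑' x, q x = 1)
    (hac : ∀ x, q x = 0 → p x = 0)
    (hW4 : Summable fun x => q x * (p x / q x) ^ 4) (A : Set σ) {N : ℕ} (hN : 1 ≤ N) :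
    expN q N (fun ω => (phatN p q N A ω - ∑' x, A.indicator p x) ^ 2)
      ≤ (1 + ∑' x, q x * (p x / q x - 1) ^ 2) / N
        + snisConst (∑' x, q x * (p x / q x - 1) ^ 2) (∑' x, q x * (p x / q x) ^ 4)
          / (N * √N) := by
  have hW0 (x : σ) : 0 ≤ p x / q x := div_nonneg (hp0 x) (hq0 x)
  set μ := ∑' x, A.indicator p x
  obtain ⟨hμ0, hμ1⟩ := tsum_indicator_mem_Icc hp0 hp hp1 A
  have hc (x : σ) := abs_indicator_one_sub_le_one A x hμ0 hμ1
  have hU := summable_mul_weight_mul_pow hq0 hq hW4 hc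
  have hV := summable_mul_weight_sub_one_pow hq0 hq hW4
  have hU2 (j : ℕ) (hj : j ≤ 2) := hU j (hj.trans (by norm_num))
  have hV2 (j : ℕ) (hj : j ≤ 2) := hV j (hj.trans (by norm_num))
  have hUmean := tsum_mul_weight_mul_indicator_sub hac hp hp1 A
  have hVmean := tsum_mul_weight_sub_one hac hp hp1 hq hq1
  have hN0 : (0 : ℝ) < N := by exact_mod_cast hN
  refine (expN_sq_div_sub_le hq0 (ptildeN_nonneg A · hW0) (ptildeN_le_ptildeN_univ A · hW0)
    hμ0 hμ1 (Real.sqrt_pos.2 hN0) (ptildeN_sub_mul_ptildeN_univ A · μ)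
    (ptildeN_univ_sub_one · (by omega)) (integrableN_sampleMean_pow 2 hU2)
    (integrableN_sampleMean_pow 4 hU) (integrableN_sampleMean_pow 2 hV2)
    (integrableN_sampleMean_pow 4 hV)).trans ?_
  have hM4 : 0 ≤ ∑' x, q x * (p x / q x) ^ 4 :=
    tsum_nonneg fun x => mul_nonneg (hq0 x) (by positivity)
  have hm2U : 0 ≤ ∑' x, q x * (p x / q x * (A.indicator 1 x - μ)) ^ 2 :=
    tsum_nonneg fun x => mul_nonneg (hq0 x) (sq_nonneg _)
  have hm2U_le := tsum_mul_weight_mul_sq_le hq0 hq hW4 hac hp hp1 hq1 hc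
  refine add_le_of_moment_bounds (Real.one_le_sqrt.2 (by exact_mod_cast hN)) (Real.sq_sqrt hN0.le)
    ((expN_sampleMean_sq hq1 hUmean hU2).trans_le (by gcongr))
    ((expN_sampleMean_pow_four_le hq1 hUmean hq0 hU hN).trans
      (div_le_div_of_nonneg_right (add_le_add (by gcongr)
        (tsum_mul_weight_mul_pow_four_le hq0 hq hW4 hc)) (by positivity)))
    (expN_sampleMean_sq hq1 hVmean hV2)
    ((expN_sampleMean_pow_four_le hq1 hVmean hq0 hV hN).trans
      (div_le_div_of_nonneg_right (add_le_add le_rfl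
        (tsum_mul_weight_sub_one_pow_four_le hq0 hq hW4 hq1)) (by positivity)))
    (add_nonneg (by positivity) (add_nonneg (by norm_num) (mul_nonneg (by norm_num) hM4)))

theorem snis_event_level_bound_general
    (p q : σ → ℝ)
    (hp0 : ∀ x, 0 ≤ p x) (hp1 : ∑' x, p x = 1)
    (hq0 : ∀ x, 0 ≤ q x) (hq1 : ∑' x, q x = 1)
    (hac : ∀ x, q x = 0 → p x = 0)
    (hW4 : Summable fun x => q x * (p x / q x) ^ 4) :
    ∃ C : ℝ, ∀ (A : Set σ) (N : ℕ), 1 ≤ N →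
      expN q N (fun ω => (phatN p q N A ω - ∑' x, A.indicator p x) ^ 2)
        ≤ (1 + ∑' x, q x * (p x / q x - 1) ^ 2) / N
          + C * ((N : ℝ) ^ (3 / 2 : ℝ))⁻¹ := by
  have hp : Summable p := summable_of_tsum_ne_zero (by simp [hp1])
  have hq : Summable q := summable_of_tsum_ne_zero (by simp [hq1])
  refine ⟨snisConst (∑' x, q x * (p x / q x - 1) ^ 2) (∑' x, q x * (p x / q x) ^ 4),
    fun A N hN => (snis_mse_le hp0 hp hp1 hq0 hq hq1 hac hW4 A hN).trans_eq ?_⟩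
  have hN0 : (0 : ℝ) < N := by exact_mod_cast hN
  rw [show (3 / 2 : ℝ) = 1 + 1 / 2 by norm_num, Real.rpow_add hN0, Real.rpow_one,
    ← Real.sqrt_eq_rpow, div_eq_mul_inv _ (_ * _)]

theorem snis_event_level_bound
    [Countable σ] (p q : σ → ℝ)
    (hp0 : ∀ x, 0 ≤ p x) (hp1 : ∑' x, p x = 1)
    (hq0 : ∀ x, 0 ≤ q x) (hq1 : ∑' x, q x = 1)
    (hac : ∀ x, q x = 0 → p x = 0)
    (hW4 : Summable fun x => q x * (p x / q x) ^ 4) :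
    ∃ C : ℝ, ∀ (A : Set σ) (N : ℕ), 1 ≤ N →
      expN q N (fun ω => (phatN p q N A ω - ∑' x, A.indicator p x) ^ 2)
        ≤ (1 + ∑' x, q x * (p x / q x - 1) ^ 2) / N
          + C * ((N : ℝ) ^ (3 / 2 : ℝ))⁻¹ :=
  snis_event_level_bound_general p q hp0 hp1 hq0 hq1 hac hW4
end
end

section
/- Assume E_q[W⁴] < ∞. The squared L² bias of the self-normalized importance resampling distribution satisfies ‖p̄_N − p‖₂² = ∑_{x∈Σ*} (p̄_N(x) − p(x))² = O((1 + χ²(p‖q))/N) as N → ∞, with a constant depending only on E_q[W⁴] and χ²(p‖q). -/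
/-!
Statement 4: Assume `E_q[W⁴] < ∞`. The squared L² bias of the self-normalized
resampling (importance) distribution satisfies
`‖p̄_N − p‖₂² = ∑_x (p̄_N(x) − p(x))² = O((1 + χ²(p‖q))/N)` as `N → ∞`, with a
constant depending only on `E_q[W⁴]` and `χ²(p‖q)`.
-/

noncomputable section

open scoped BigOperators

variable {σ : Type*}

/-- The self-normalized (importance resampling) random distribution
`p̂_N(x)(ω) = (∑ₙ W⁽ⁿ⁾ 1[ωₙ = x]) / (∑ₘ W⁽ᵐ⁾)`. -/
def phatPoint (p q : σ → ℝ) (N : ℕ) (x : σ) (ω : Fin N → σ) : ℝ :=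
  (∑ n, (p (ω n) / q (ω n)) * ({x} : Set σ).indicator 1 (ω n))
    / (∑ m, p (ω m) / q (ω m))

/-- `p̄_N(x) = E[p̂_N(x)]`, the expected importance resampling distribution. -/
def pbarN (p q : σ → ℝ) (N : ℕ) (x : σ) : ℝ :=
  expN q N (phatPoint p q N x)

/-!
With `S = ∑ₙ W⁽ⁿ⁾` and `Tₓ = ∑ₙ W⁽ⁿ⁾ 1[X⁽ⁿ⁾ = x]` we have `p̂_N(x) = Tₓ / S`, `Tₓ = p̂_N(x) S` and
`E[Tₓ] = N p(x)`, so the bias is `p̄_N(x) − p(x) = E[p̂_N(x) (1 − S/N)]`. Cauchy–Schwarz against the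
weights `p̂_N(x) ∈ [0, 1]` gives `(p̄_N(x) − p(x))² ≤ E[p̂_N(x) (1 − S/N)²]`, and since
`∑ₓ p̂_N(x) ≤ 1`, summing over `x` bounds the squared L² bias by `E[(1 − S/N)²] = χ²(p‖q)/N`, the
variance of the mean of `N` i.i.d. weights of mean `1`. Hence `C = 1` and `N₀ = 1` work.
-/

section PiProd

variable {ι R : Type*} [NormedCommRing R]

theorem summable_norm_pi_prod {N : ℕ} {f : Fin N → ι → R}
    (hf : ∀ n, Summable fun x => ‖f n x‖) :
    Summable fun ω : Fin N → ι => ‖∏ n, f n (ω n)‖ := by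
  induction N with
  | zero => exact Summable.of_finite
  | succ N ih =>
    rw [← (Fin.consEquiv fun _ => ι).summable_iff]
    refine ((hf 0).mul_norm (ih fun n => hf n.succ)).congr fun a => ?_
    simp [Fin.prod_univ_succ, Fin.consEquiv_apply]

theorem prod_tsum_of_summable_norm [CompleteSpace R] {N : ℕ} {f : Fin N → ι → R}
    (hf : ∀ n, Summable fun x => ‖f n x‖) :
    ∏ n, ∑' x, f n x = ∑' ω : Fin N → ι, ∏ n, f n (ω n) := by
  induction N with
  | zero => simp
  | succ N ih =>
    rw [← (Fin.consEquiv fun _ => ι).tsum_eq, Fin.prod_univ_succ, ih fun n => hf n.succ,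
      tsum_mul_tsum_of_summable_norm (hf 0) (summable_norm_pi_prod fun n => hf n.succ)]
    simp [Fin.prod_univ_succ, Fin.consEquiv_apply]

end PiProd

theorem hasSum_of_tsum_eq_of_ne_zero {ι α : Type*} [AddCommMonoid α] [TopologicalSpace α]
    {f : ι → α} {a : α} (h : ∑' i, f i = a) (ha : a ≠ 0) : HasSum f a := by
  have hf : Summable f := by
    by_contra hf
    exact ha (h ▸ tsum_eq_zero_of_not_summable hf)
  exact h ▸ hf.hasSum

theorem tsum_sq_le_tsum_mul_tsum_of_sq_le_mul {ι : Type*} {r f g : ι → ℝ}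
    (hf0 : ∀ i, 0 ≤ f i) (hg0 : ∀ i, 0 ≤ g i) (hf : Summable f) (hg : Summable g)
    (hrfg : ∀ i, r i ^ 2 ≤ f i * g i) :
    (∑' i, r i) ^ 2 ≤ (∑' i, f i) * ∑' i, g i := by
  have hr : Summable r := by
    refine Summable.of_norm_bounded ((hf.add hg).div_const 2) fun i => ?_
    rw [Real.norm_eq_abs]
    apply abs_le_of_sq_le_sq _ (by linarith [hf0 i, hg0 i])
    nlinarith [hrfg i, sq_nonneg (f i - g i)]
  refine le_of_tendsto' (hr.hasSum.pow 2) fun s => ?_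
  calc (∑ i ∈ s, r i) ^ 2 ≤ (∑ i ∈ s, f i) * ∑ i ∈ s, g i :=
        Finset.sum_sq_le_sum_mul_sum_of_sq_le_mul s (fun i _ => hf0 i) (fun i _ => hg0 i)
          fun i _ => hrfg i
    _ ≤ (∑' i, f i) * ∑' i, g i :=
        mul_le_mul (hf.sum_le_tsum s fun i _ => hf0 i) (hg.sum_le_tsum s fun i _ => hg0 i)
          (Finset.sum_nonneg fun i _ => hg0 i) (tsum_nonneg hf0)

theorem tsum_sq_tsum_mul_le_tsum_mul_sq {ι α : Type*} {w d : α → ℝ} {R : ι → α → ℝ}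
    (hw0 : ∀ a, 0 ≤ w a) (hw : Summable w) (hw1 : ∑' a, w a ≤ 1)
    (hR0 : ∀ i a, 0 ≤ R i a) (hR1 : ∀ a (s : Finset ι), ∑ i ∈ s, R i a ≤ 1)
    (hd : Summable fun a => w a * d a ^ 2) :
    ∑' i, (∑' a, w a * (R i a * d a)) ^ 2 ≤ ∑' a, w a * d a ^ 2 := by
  have hR_le_one : ∀ i a, R i a ≤ 1 := fun i a => by simpa using hR1 a {i}
  have hwR0 : ∀ i a, 0 ≤ w a * R i a := fun i a => mul_nonneg (hw0 a) (hR0 i a)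
  have hwRd0 : ∀ i a, 0 ≤ w a * R i a * d a ^ 2 := fun i a => mul_nonneg (hwR0 i a) (sq_nonneg _)
  have hwR : ∀ i, Summable fun a => w a * R i a := fun i =>
    hw.of_nonneg_of_le (hwR0 i) fun a => mul_le_of_le_one_right (hw0 a) (hR_le_one i a)
  have hwRd : ∀ i, Summable fun a => w a * R i a * d a ^ 2 := fun i =>
    hd.of_nonneg_of_le (hwRd0 i) fun a =>
      mul_le_mul_of_nonneg_right (mul_le_of_le_one_right (hw0 a) (hR_le_one i a)) (sq_nonneg _)
  have hsq : ∀ i, (∑' a, w a * (R i a * d a)) ^ 2 ≤ ∑' a, w a * R i a * d a ^ 2 := fun i =>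
    calc (∑' a, w a * (R i a * d a)) ^ 2
        ≤ (∑' a, w a * R i a) * ∑' a, w a * R i a * d a ^ 2 :=
          tsum_sq_le_tsum_mul_tsum_of_sq_le_mul (hwR0 i) (hwRd0 i) (hwR i) (hwRd i)
            fun a => (by ring : _ = _).le
      _ ≤ ∑' a, w a * R i a * d a ^ 2 :=
          mul_le_of_le_one_left (tsum_nonneg (hwRd0 i)) <| le_trans
            ((hwR i).tsum_le_tsum (fun a => mul_le_of_le_one_right (hw0 a) (hR_le_one i a)) hw) hw1
  refine Real.tsum_le_of_sum_le (fun i => sq_nonneg _) fun s => ?_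
  calc ∑ i ∈ s, (∑' a, w a * (R i a * d a)) ^ 2
      ≤ ∑ i ∈ s, ∑' a, w a * R i a * d a ^ 2 := Finset.sum_le_sum fun i _ => hsq i
    _ = ∑' a, ∑ i ∈ s, w a * R i a * d a ^ 2 := (Summable.tsum_finsetSum fun i _ => hwRd i).symm
    _ ≤ ∑' a, w a * d a ^ 2 := by
        refine Summable.tsum_le_tsum (fun a => ?_) (summable_sum fun i _ => hwRd i) hd
        rw [← Finset.sum_mul, ← Finset.mul_sum]
        exact mul_le_mul_of_nonneg_right (mul_le_of_le_one_right (hw0 a) (hR1 a s)) (sq_nonneg _)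

section IidSample

variable {q : σ → ℝ} {N : ℕ}

theorem hasSum_iid_prod {g : Fin N → σ → ℝ} (hg : ∀ n, Summable fun x => ‖q x * g n x‖) :
    HasSum (fun ω : Fin N → σ => (∏ n, q (ω n)) * ∏ n, g n (ω n))
      (∏ n, ∑' x, q x * g n x) := by
  simp_rw [← Finset.prod_mul_distrib]
  rw [prod_tsum_of_summable_norm hg]
  exact (summable_norm_pi_prod hg).of_norm.hasSum

theorem hasSum_iid_weight (hq : HasSum q 1) :
    HasSum (fun ω : Fin N → σ => ∏ n, q (ω n)) 1 := by
  have hq' : Summable fun x => ‖q x‖ := hq.summable.norm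
  have h := (summable_norm_pi_prod fun _ : Fin N => hq').of_norm.hasSum
  rwa [← prod_tsum_of_summable_norm fun _ => hq', hq.tsum_eq, Finset.prod_const_one] at h

theorem hasSum_iid_apply (hq : HasSum q 1) (m : Fin N) {g : σ → ℝ}
    (hg : Summable fun x => ‖q x * g x‖) :
    HasSum (fun ω : Fin N → σ => (∏ n, q (ω n)) * g (ω m)) (∑' x, q x * g x) := by
  have hq' : Summable fun x => ‖q x * 1‖ := by simpa using hq.summable.norm
  convert hasSum_iid_prod (g := fun n => if n = m then g else 1) (fun _ => by
    split_ifs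
    exacts [hg, hq']) using 1
  · ext ω
    congr 1
    rw [Fintype.prod_eq_single m fun n hn => by simp [hn]]
    simp
  · rw [Fintype.prod_eq_single m fun n hn => by simp [hn, hq.tsum_eq]]
    simp

theorem hasSum_iid_apply_mul_apply (hq : HasSum q 1) {m m' : Fin N}
    (hmm' : m ≠ m') {g h : σ → ℝ} (hg : Summable fun x => ‖q x * g x‖)
    (hh : Summable fun x => ‖q x * h x‖) :
    HasSum (fun ω : Fin N → σ => (∏ n, q (ω n)) * (g (ω m) * h (ω m')))
      ((∑' x, q x * g x) * ∑' x, q x * h x) := by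
  have hq' : Summable fun x => ‖q x * 1‖ := by simpa using hq.summable.norm
  convert hasSum_iid_prod (g := fun n => if n = m then g else if n = m' then h else 1) (fun _ => by
    split_ifs
    exacts [hg, hh, hq']) using 1
  · ext ω
    congr 1
    rw [Fintype.prod_eq_mul m m' hmm' fun n hn => by simp [hn.1, hn.2]]
    simp [hmm'.symm]
  · rw [Fintype.prod_eq_mul m m' hmm' fun n hn => by simp [hn.1, hn.2, hq.tsum_eq]]
    simp [hmm'.symm]

theorem hasSum_iid_sq_sum (hq : HasSum q 1) {u : σ → ℝ}
    (hu : Summable fun x => ‖q x * u x‖) (hu2 : Summable fun x => ‖q x * u x ^ 2‖)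
    (hmean : ∑' x, q x * u x = 0) :
    HasSum (fun ω : Fin N → σ => (∏ n, q (ω n)) * (∑ n, u (ω n)) ^ 2)
      (N * ∑' x, q x * u x ^ 2) := by
  classical
  have hterm : ∀ m m' : Fin N, HasSum (fun ω : Fin N → σ => (∏ n, q (ω n)) * (u (ω m) * u (ω m')))
      (if m = m' then ∑' x, q x * u x ^ 2 else 0) := by
    intro m m'
    split_ifs with hmm'
    · subst hmm'
      simpa only [sq] using hasSum_iid_apply hq m hu2
    · simpa [hmean] using hasSum_iid_apply_mul_apply hq hmm' hu hu
  convert hasSum_sum (s := Finset.univ) fun m _ =>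
    hasSum_sum (s := Finset.univ) fun m' _ => hterm m m' using 1
  · ext ω
    simp_rw [sq, Finset.sum_mul_sum, Finset.mul_sum]
  · simp

end IidSample

section ImportanceResampling

variable {p q : σ → ℝ} {N : ℕ}

theorem phatPoint_nonneg (hp0 : ∀ x, 0 ≤ p x) (hq0 : ∀ x, 0 ≤ q x) (x : σ) (ω : Fin N → σ) :
    0 ≤ phatPoint p q N x ω :=
  div_nonneg (Finset.sum_nonneg fun _ _ => mul_nonneg (div_nonneg (hp0 _) (hq0 _))
      (Set.indicator_nonneg (fun _ _ => zero_le_one) _))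
    (Finset.sum_nonneg fun _ _ => div_nonneg (hp0 _) (hq0 _))

theorem sum_phatPoint_le_one (hp0 : ∀ x, 0 ≤ p x) (hq0 : ∀ x, 0 ≤ q x) (ω : Fin N → σ)
    (s : Finset σ) : ∑ x ∈ s, phatPoint p q N x ω ≤ 1 := by
  classical
  unfold phatPoint
  rw [← Finset.sum_div, Finset.sum_comm]
  refine div_le_one_of_le₀ (Finset.sum_le_sum fun n _ => ?_)
    (Finset.sum_nonneg fun _ _ => div_nonneg (hp0 _) (hq0 _))
  rw [← Finset.mul_sum]
  refine mul_le_of_le_one_right (div_nonneg (hp0 _) (hq0 _)) ?_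
  simp only [Set.indicator_apply, Set.mem_singleton_iff, Pi.one_apply, Finset.sum_ite_eq]
  split_ifs <;> norm_num

theorem phatPoint_mul_sum (hp0 : ∀ x, 0 ≤ p x) (hq0 : ∀ x, 0 ≤ q x) (x : σ) (ω : Fin N → σ) :
    phatPoint p q N x ω * ∑ m, p (ω m) / q (ω m)
      = ∑ n, p (ω n) / q (ω n) * ({x} : Set σ).indicator 1 (ω n) := by
  by_cases hS : ∑ m, p (ω m) / q (ω m) = 0
  · rw [Finset.sum_eq_zero_iff_of_nonneg fun m _ => div_nonneg (hp0 _) (hq0 _)] at hS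
    simp [hS]
  · exact div_mul_cancel₀ _ hS

theorem hasSum_iid_weighted_count (hq : HasSum q 1) (hac : ∀ x, q x = 0 → p x = 0) (x : σ) :
    HasSum (fun ω : Fin N → σ =>
        (∏ n, q (ω n)) * ∑ n, p (ω n) / q (ω n) * ({x} : Set σ).indicator 1 (ω n))
      (N * p x) := by
  classical
  have hpoint :
      ∀ y, q y * (p y / q y * ({x} : Set σ).indicator 1 y) = if y = x then p x else 0 := by
    intro y
    split_ifs with hy
    · subst hy
      simp [mul_div_cancel_of_imp' (hac y)]
    · simp [hy]
  have hsum : Summable fun y => ‖q y * (p y / q y * ({x} : Set σ).indicator 1 y)‖ :=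
    summable_of_ne_finset_zero (s := {x}) fun y hy => by
      rw [hpoint, if_neg (Finset.notMem_singleton.mp hy), norm_zero]
  convert hasSum_sum (s := Finset.univ) fun n _ => hasSum_iid_apply hq n hsum using 1
  · ext ω
    rw [Finset.mul_sum]
  · rw [tsum_congr hpoint, tsum_ite_eq]
    simp

theorem hasSum_iid_sq_deviation (hq0 : ∀ x, 0 ≤ q x) (hq : HasSum q 1) (hp : HasSum p 1)
    (hac : ∀ x, q x = 0 → p x = 0) (hW4 : Summable fun x => q x * (p x / q x) ^ 4) :
    HasSum (fun ω : Fin N → σ => (∏ n, q (ω n)) * ((N - ∑ n, p (ω n) / q (ω n)) / N) ^ 2)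
      ((∑' x, q x * (p x / q x - 1) ^ 2) / N) := by
  have hqu : ∀ x, q x * (1 - p x / q x) = q x - p x := fun x => by
    rw [mul_sub, mul_one, mul_div_cancel_of_imp' (hac x)]
  have hmean : ∑' x, q x * (1 - p x / q x) = 0 := by
    simp_rw [hqu]
    rw [(hq.sub hp).tsum_eq, sub_self]
  have hu : Summable fun x => ‖q x * (1 - p x / q x)‖ := by
    simpa only [hqu] using (hq.summable.sub hp.summable).norm
  have hu2 : Summable fun x => ‖q x * (1 - p x / q x) ^ 2‖ := by
    -- `(1 - W)² ≤ 3 + W⁴`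
    refine Summable.of_nonneg_of_le (fun x => norm_nonneg _) (fun x => ?_)
      ((hq.summable.mul_left 3).add hW4)
    rw [Real.norm_of_nonneg (mul_nonneg (hq0 x) (sq_nonneg _))]
    have := hq0 x
    nlinarith [mul_nonneg (hq0 x) (sq_nonneg ((p x / q x) ^ 2 - 1)),
      mul_nonneg (hq0 x) (sq_nonneg (p x / q x + 1))]
  have hval : (N * ∑' x, q x * (1 - p x / q x) ^ 2) / (N : ℝ) ^ 2
      = (∑' x, q x * (p x / q x - 1) ^ 2) / N := by
    rw [tsum_congr fun x => by rw [← neg_sub, neg_sq]]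
    rcases eq_or_ne (N : ℝ) 0 with hN | hN
    · simp [hN]
    · field_simp
  have h := (hasSum_iid_sq_sum (N := N) hq hu hu2 hmean).div_const ((N : ℝ) ^ 2)
  rw [hval] at h
  refine h.congr_fun fun ω => ?_
  simp [Finset.sum_sub_distrib, div_pow, mul_div_assoc]

theorem hasSum_iid_phatPoint_sub (hp0 : ∀ x, 0 ≤ p x) (hq0 : ∀ x, 0 ≤ q x) (hq : HasSum q 1)
    (hac : ∀ x, q x = 0 → p x = 0) (hN : N ≠ 0) (x : σ) :
    HasSum (fun ω : Fin N → σ => (∏ n, q (ω n)) *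
        (phatPoint p q N x ω * ((N - ∑ n, p (ω n) / q (ω n)) / N)))
      (pbarN p q N x - p x) := by
  have hN' : (N : ℝ) ≠ 0 := Nat.cast_ne_zero.mpr hN
  have hphat : HasSum (fun ω : Fin N → σ => (∏ n, q (ω n)) * phatPoint p q N x ω)
      (pbarN p q N x) := by
    refine Summable.hasSum ?_
    refine (hasSum_iid_weight hq).summable.of_nonneg_of_le
      (fun ω => mul_nonneg (Finset.prod_nonneg fun _ _ => hq0 _) (phatPoint_nonneg hp0 hq0 x ω))
      fun ω => mul_le_of_le_one_right (Finset.prod_nonneg fun _ _ => hq0 _) ?_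
    simpa using sum_phatPoint_le_one hp0 hq0 ω {x}
  have hcount := (hasSum_iid_weighted_count (N := N) hq hac x).div_const N
  rw [mul_div_cancel_left₀ _ hN'] at hcount
  refine (hphat.sub hcount).congr_fun fun ω => ?_
  rw [← phatPoint_mul_sum hp0 hq0]
  field_simp

end ImportanceResampling

theorem sir_L2_bias_squared_general
    (p q : σ → ℝ)
    (hp0 : ∀ x, 0 ≤ p x) (hp1 : ∑' x, p x = 1)
    (hq0 : ∀ x, 0 ≤ q x) (hq1 : ∑' x, q x = 1)
    (hac : ∀ x, q x = 0 → p x = 0)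
    (hW4 : Summable fun x => q x * (p x / q x) ^ 4) :
    ∃ C : ℝ, 0 < C ∧ ∃ N₀ : ℕ, ∀ N : ℕ, N₀ ≤ N →
      ∑' x : σ, (pbarN p q N x - p x) ^ 2
        ≤ C * ((1 + ∑' y, q y * (p y / q y - 1) ^ 2) / N) := by
  have hp := hasSum_of_tsum_eq_of_ne_zero hp1 one_ne_zero
  have hq := hasSum_of_tsum_eq_of_ne_zero hq1 one_ne_zero
  refine ⟨1, one_pos, 1, fun N hN => ?_⟩
  have hN0 : N ≠ 0 := by omega
  have hweight := hasSum_iid_weight (N := N) hq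
  have hdev := hasSum_iid_sq_deviation (N := N) hq0 hq hp hac hW4
  calc ∑' x, (pbarN p q N x - p x) ^ 2
      = ∑' x, (∑' ω : Fin N → σ, (∏ n, q (ω n)) *
          (phatPoint p q N x ω * ((N - ∑ n, p (ω n) / q (ω n)) / N))) ^ 2 := by
        simp_rw [(hasSum_iid_phatPoint_sub hp0 hq0 hq hac hN0 _).tsum_eq]
    _ ≤ ∑' ω : Fin N → σ, (∏ n, q (ω n)) * ((N - ∑ n, p (ω n) / q (ω n)) / N) ^ 2 :=
        tsum_sq_tsum_mul_le_tsum_mul_sq (fun ω => Finset.prod_nonneg fun _ _ => hq0 _)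
          hweight.summable hweight.tsum_eq.le (phatPoint_nonneg hp0 hq0)
          (sum_phatPoint_le_one hp0 hq0) hdev.summable
    _ = (∑' y, q y * (p y / q y - 1) ^ 2) / N := hdev.tsum_eq
    _ ≤ 1 * ((1 + ∑' y, q y * (p y / q y - 1) ^ 2) / N) := by
        rw [one_mul]
        gcongr
        linarith

theorem sir_L2_bias_squared
    [Countable σ] (p q : σ → ℝ)
    (hp0 : ∀ x, 0 ≤ p x) (hp1 : ∑' x, p x = 1)
    (hq0 : ∀ x, 0 ≤ q x) (hq1 : ∑' x, q x = 1)
    (hac : ∀ x, q x = 0 → p x = 0)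
    (hW4 : Summable fun x => q x * (p x / q x) ^ 4) :
    ∃ C : ℝ, 0 < C ∧ ∃ N₀ : ℕ, ∀ N : ℕ, N₀ ≤ N →
      ∑' x : σ, (pbarN p q N x - p x) ^ 2
        ≤ C * ((1 + ∑' y, q y * (p y / q y - 1) ^ 2) / N) :=
  sir_L2_bias_squared_general p q hp0 hp1 hq0 hq1 hac hW4
end
end
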